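/- arXiv:1703.02678 — 7 statements merged into one kernel-verified Lean document; each statement's English description precedes it below -/
import Mathlib

section
/- If a family of vectors {φ_i}_{i=1}^{2d-1} in R^d has the complement property, then it is full spark. -/
open scoped InnerProductSpace

/-- A family of `2d-1` vectors with the complement property is full spark. -/
theorem complementProperty_implies_fullSpark (d : ℕ)
    (φ : Fin (2 * d - 1) → EuclideanSpace ℝ (Fin d))
    (hcp : ∀ I : Finset (Fin (2 * d - 1)),
      Submodule.span ℝ (φ '' (I : Set (Fin (2 * d - 1)))) = ⊤ ∨
      Submodule.span ℝ (φ '' ((I : Set (Fin (2 * d - 1)))ᶜ)) = ⊤) :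
    ∀ s : Finset (Fin (2 * d - 1)), s.card = d →
      LinearIndependent ℝ (fun i : s => φ i) := by
  intro s hs
  classical
  rcases Nat.eq_zero_or_pos d with hd | hd
  · subst hd
    have : IsEmpty (Fin (2 * 0 - 1)) := inferInstanceAs (IsEmpty (Fin 0))
    have hse : IsEmpty s := by
      constructor; intro x; exact this.false x.1
    exact linearIndependent_empty_type
  -- complement has fewer than d elements, so its span can't be everything
  have hfr : Module.finrank ℝ (EuclideanSpace ℝ (Fin d)) = d := by
    simp [finrank_euclideanSpace]
  have hcompl : Submodule.span ℝ (φ '' ((s : Set (Fin (2 * d - 1)))ᶜ)) ≠ ⊤ := by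
    intro htop
    have himg : φ '' ((s : Set (Fin (2 * d - 1)))ᶜ) = ((sᶜ.image φ : Finset _) : Set _) := by
      rw [← Finset.coe_compl]
      simp [Finset.coe_image]
    have hle : Module.finrank ℝ (Submodule.span ℝ (φ '' ((s : Set (Fin (2 * d - 1)))ᶜ)))
        ≤ (sᶜ.image φ).card := by
      rw [himg]
      exact finrank_span_finset_le_card _
    rw [htop] at hle
    have hcard : (sᶜ.image φ).card ≤ sᶜ.card := Finset.card_image_le
    have hcc : sᶜ.card = 2 * d - 1 - d := by
      rw [Finset.card_compl, hs, Fintype.card_fin]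
    have : Module.finrank ℝ (⊤ : Submodule ℝ (EuclideanSpace ℝ (Fin d))) = d := by
      rw [finrank_top, hfr]
    omega
  have hspan : Submodule.span ℝ (φ '' (s : Set (Fin (2 * d - 1)))) = ⊤ :=
    (hcp s).resolve_right hcompl
  apply linearIndependent_of_top_le_span_of_card_eq_finrank
  · rw [← hspan]
    apply Submodule.span_le.mpr
    rintro x ⟨i, hi, rfl⟩
    apply Submodule.subset_span
    exact ⟨⟨i, hi⟩, rfl⟩
  · rw [hfr, Fintype.card_coe, hs]
end

section
/- Let {W_i}_{i=1}^n be subspaces of R^d with orthogonal projections {P_i}_{i=1}^n such that {W_i}_{i=1}^n does phase retrieval. Then {W_i^⊥}_{i=1}^n (with projections I - P_i) does phase retrieval if and only if it does norm retrieval. -/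
/-!
By Pythagoras, `‖x‖² = ‖Pᵢ x‖² + ‖(I - Pᵢ) x‖²`. So if `x` and `y` have the same norm and
the same measurements `‖(I - Pᵢ) x‖ = ‖(I - Pᵢ) y‖`, they also have the same measurements
`‖Pᵢ x‖ = ‖Pᵢ y‖`, and phase retrieval by `{Wᵢ}` gives `x = ± y`. Hence norm retrieval by
the complements upgrades to phase retrieval; the converse holds for any family.
-/

namespace Submodule

variable {E ι : Type*} [NormedAddCommGroup E] [InnerProductSpace ℝ E]

def PhaseRetrieval (V : ι → Submodule ℝ E) [∀ i, (V i).HasOrthogonalProjection] : Prop :=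
  ∀ x y : E,
    (∀ i, ‖((V i).orthogonalProjectionOnto x : E)‖ = ‖((V i).orthogonalProjectionOnto y : E)‖) →
    x = y ∨ x = -y

def NormRetrieval (V : ι → Submodule ℝ E) [∀ i, (V i).HasOrthogonalProjection] : Prop :=
  ∀ x y : E,
    (∀ i, ‖((V i).orthogonalProjectionOnto x : E)‖ = ‖((V i).orthogonalProjectionOnto y : E)‖) →
    ‖x‖ = ‖y‖

theorem PhaseRetrieval.normRetrieval {V : ι → Submodule ℝ E}
    [∀ i, (V i).HasOrthogonalProjection] (h : PhaseRetrieval V) : NormRetrieval V := by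
  intro x y hxy
  rcases h x y hxy with rfl | rfl
  · rfl
  · exact norm_neg _

theorem norm_orthogonalProjectionOnto_eq_of_norm_eq (K : Submodule ℝ E)
    [K.HasOrthogonalProjection] {x y : E} (hxy : ‖x‖ = ‖y‖)
    (hperp : ‖(Kᗮ.orthogonalProjectionOnto x : E)‖ = ‖(Kᗮ.orthogonalProjectionOnto y : E)‖) :
    ‖(K.orthogonalProjectionOnto x : E)‖ = ‖(K.orthogonalProjectionOnto y : E)‖ := by
  have hx := norm_sq_eq_add_norm_sq_projection x K
  have hy := norm_sq_eq_add_norm_sq_projection y K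
  simp only [norm_coe] at hperp ⊢
  rw [hxy, hperp, hy] at hx
  exact (sq_eq_sq₀ (norm_nonneg _) (norm_nonneg _)).mp (add_right_cancel hx).symm

theorem PhaseRetrieval.phaseRetrieval_orthogonal_iff {V : ι → Submodule ℝ E}
    [∀ i, (V i).HasOrthogonalProjection] (h : PhaseRetrieval V) :
    PhaseRetrieval (fun i ↦ (V i)ᗮ) ↔ NormRetrieval (fun i ↦ (V i)ᗮ) :=
  ⟨PhaseRetrieval.normRetrieval, fun hNR x y hxy ↦
    h x y fun i ↦ norm_orthogonalProjectionOnto_eq_of_norm_eq (V i) (hNR x y hxy) (hxy i)⟩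

end Submodule

/-- If `{Wᵢ}` does phase retrieval, then `{Wᵢᗮ}` does phase retrieval iff it does
norm retrieval. -/
theorem complements_phase_iff_norm (d n : ℕ)
    (W : Fin n → Submodule ℝ (EuclideanSpace ℝ (Fin d)))
    (hPR : ∀ x y : EuclideanSpace ℝ (Fin d),
      (∀ i, ‖(Submodule.orthogonalProjectionOnto (W i) x : EuclideanSpace ℝ (Fin d))‖
        = ‖(Submodule.orthogonalProjectionOnto (W i) y : EuclideanSpace ℝ (Fin d))‖) → x = y ∨ x = -y) :
    (∀ x y : EuclideanSpace ℝ (Fin d),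
      (∀ i, ‖(Submodule.orthogonalProjectionOnto (W i)ᗮ x : EuclideanSpace ℝ (Fin d))‖
        = ‖(Submodule.orthogonalProjectionOnto (W i)ᗮ y : EuclideanSpace ℝ (Fin d))‖) → x = y ∨ x = -y) ↔
    (∀ x y : EuclideanSpace ℝ (Fin d),
      (∀ i, ‖(Submodule.orthogonalProjectionOnto (W i)ᗮ x : EuclideanSpace ℝ (Fin d))‖
        = ‖(Submodule.orthogonalProjectionOnto (W i)ᗮ y : EuclideanSpace ℝ (Fin d))‖) → ‖x‖ = ‖y‖) :=
  Submodule.PhaseRetrieval.phaseRetrieval_orthogonal_iff hPR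
end

section
/- Let W_1,...,W_n be proper subspaces of R^d with projections P_i satisfying ∑_{i=1}^n a_i² P_i = A·I for some scalars a_i and A > 0. Then {W_i}_{i=1}^n does phase retrieval if and only if {W_i^⊥}_{i=1}^n does phase retrieval. -/
open scoped InnerProductSpace

/-!
Pairing `∑ cᵢ Pᵢ = A·I` with `x` gives `∑ cᵢ ‖Pᵢ x‖² = A ‖x‖²`, and since `I - Pᵢ` projects onto
`Wᵢᗮ`, also `∑ cᵢ (I - Pᵢ) = (∑ cᵢ - A)·I`. Both constants are nonzero (the second because the
`Wᵢ` are proper), so either family of norms `‖Pᵢ x‖` or `‖(I - Pᵢ) x‖` determines `‖x‖`. Once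
`‖x‖ = ‖y‖` is known, Pythagoras `‖Pᵢ x‖² + ‖(I - Pᵢ) x‖² = ‖x‖²` makes the two families of
measurements of `x` and `y` agree simultaneously.
-/

namespace Submodule

variable {E : Type*} [NormedAddCommGroup E] [InnerProductSpace ℝ E]

theorem norm_starProjection_eq_iff_orthogonal (K : Submodule ℝ E) [K.HasOrthogonalProjection]
    {x y : E} (hxy : ‖x‖ = ‖y‖) :
    ‖K.starProjection x‖ = ‖K.starProjection y‖ ↔ ‖Kᗮ.starProjection x‖ = ‖Kᗮ.starProjection y‖ := by
  have hx := K.norm_sq_eq_add_norm_sq_starProjection x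
  have hy := K.norm_sq_eq_add_norm_sq_starProjection y
  rw [hxy] at hx
  rw [← sq_eq_sq₀ (norm_nonneg _) (norm_nonneg _), ← sq_eq_sq₀ (norm_nonneg _) (norm_nonneg _)]
  constructor <;> intro h <;> linarith

variable {ι : Type*} (K : ι → Submodule ℝ E) [∀ i, (K i).HasOrthogonalProjection]

theorem forall_norm_starProjection_eq_iff_orthogonal {x y : E} (hxy : ‖x‖ = ‖y‖) :
    (∀ i, ‖(K i).starProjection x‖ = ‖(K i).starProjection y‖) ↔
      ∀ i, ‖(K i)ᗮ.starProjection x‖ = ‖(K i)ᗮ.starProjection y‖ :=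
  forall_congr' fun i => (K i).norm_starProjection_eq_iff_orthogonal hxy

variable [Fintype ι] {c : ι → ℝ} {A : ℝ}

theorem sum_mul_norm_sq_starProjection (h : ∀ x, ∑ i, c i • (K i).starProjection x = A • x)
    (x : E) : ∑ i, c i * ‖(K i).starProjection x‖ ^ 2 = A * ‖x‖ ^ 2 := by
  have hx := congrArg (⟪·, x⟫_ℝ) (h x)
  simp only [sum_inner, real_inner_smul_left, real_inner_self_eq_norm_sq] at hx
  rw [← hx]
  refine Finset.sum_congr rfl fun i _ => ?_
  have hPx := (K i).re_inner_starProjection_eq_normSq x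
  rw [RCLike.re_to_real] at hPx
  rw [hPx, starProjection_apply, norm_coe]

theorem sum_smul_starProjection_orthogonal (h : ∀ x, ∑ i, c i • (K i).starProjection x = A • x)
    (x : E) : ∑ i, c i • (K i)ᗮ.starProjection x = (∑ i, c i - A) • x := by
  simp only [starProjection_orthogonal_val, smul_sub, Finset.sum_sub_distrib, h, Finset.sum_smul,
    sub_smul]

theorem norm_eq_of_forall_norm_starProjection_eq
    (h : ∀ x, ∑ i, c i • (K i).starProjection x = A • x) (hA : A ≠ 0) {x y : E}
    (hxy : ∀ i, ‖(K i).starProjection x‖ = ‖(K i).starProjection y‖) : ‖x‖ = ‖y‖ := by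
  have hsq : A * ‖x‖ ^ 2 = A * ‖y‖ ^ 2 := by
    simp only [← sum_mul_norm_sq_starProjection K h, hxy]
  exact (sq_eq_sq₀ (norm_nonneg _) (norm_nonneg _)).1 (mul_left_cancel₀ hA hsq)

theorem sum_sub_ne_zero_of_ne_top (h : ∀ x, ∑ i, c i • (K i).starProjection x = A • x)
    (hc : ∀ i, 0 ≤ c i) (hK : ∀ i, K i ≠ ⊤) (hA : A ≠ 0) : ∑ i, c i - A ≠ 0 := by
  intro hS
  have hperp (x : E) : ∑ i, c i * ‖(K i)ᗮ.starProjection x‖ ^ 2 = 0 := by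
    rw [sum_mul_norm_sq_starProjection _ (sum_smul_starProjection_orthogonal K h), hS, zero_mul]
  have hc0 (i : ι) : c i = 0 := by
    obtain ⟨w, hw, hw0⟩ := exists_mem_ne_zero_of_ne_bot ((orthogonal_eq_bot_iff).not.2 (hK i))
    have hterm := (Finset.sum_eq_zero_iff_of_nonneg fun j _ =>
      mul_nonneg (hc j) (sq_nonneg _)).1 (hperp w) i (Finset.mem_univ i)
    rw [starProjection_eq_self_iff.2 hw] at hterm
    simpa [hw0] using hterm
  exact hA (by simpa [hc0] using hS)

end Submodule

/-- For proper subspaces with `∑ aᵢ² Pᵢ = A·I`, `{Wᵢ}` does phase retrieval iff `{Wᵢᗮ}` does. -/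
theorem tight_complements_phase_iff (d n : ℕ)
    (W : Fin n → Submodule ℝ (EuclideanSpace ℝ (Fin d)))
    (hW : ∀ i, W i ≠ ⊤)
    (a : Fin n → ℝ) (A : ℝ) (hA : 0 < A)
    (h : ∀ x : EuclideanSpace ℝ (Fin d),
      ∑ i, a i ^ 2 • ((Submodule.orthogonalProjectionOnto (W i) x : EuclideanSpace ℝ (Fin d))) = A • x) :
    (∀ x y : EuclideanSpace ℝ (Fin d),
      (∀ i, ‖(Submodule.orthogonalProjectionOnto (W i) x : EuclideanSpace ℝ (Fin d))‖
        = ‖(Submodule.orthogonalProjectionOnto (W i) y : EuclideanSpace ℝ (Fin d))‖) → x = y ∨ x = -y) ↔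
    (∀ x y : EuclideanSpace ℝ (Fin d),
      (∀ i, ‖(Submodule.orthogonalProjectionOnto (W i)ᗮ x : EuclideanSpace ℝ (Fin d))‖
        = ‖(Submodule.orthogonalProjectionOnto (W i)ᗮ y : EuclideanSpace ℝ (Fin d))‖) → x = y ∨ x = -y) := by
  have hcompl := Submodule.sum_smul_starProjection_orthogonal W h
  have hcompl_ne := Submodule.sum_sub_ne_zero_of_ne_top W h (fun i => sq_nonneg (a i)) hW hA.ne'
  constructor
  · intro hPR x y hxy
    have hnorm := Submodule.norm_eq_of_forall_norm_starProjection_eq _ hcompl hcompl_ne hxy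
    exact hPR x y <| (Submodule.forall_norm_starProjection_eq_iff_orthogonal W hnorm).2 hxy
  · intro hPR x y hxy
    have hnorm := Submodule.norm_eq_of_forall_norm_starProjection_eq W h hA.ne' hxy
    exact hPR x y <| (Submodule.forall_norm_starProjection_eq_iff_orthogonal W hnorm).1 hxy
end

section
/- If hyperplanes W_1,...,W_n (subspaces of dimension d-1) do phase retrieval in R^d, then n ≥ 2d-2. -/
/-!
If `n ≤ 2d - 3`, split the hyperplanes into a group `A` of at most `d - 2` and a group `B` of at
most `d - 1`. Each hyperplane cuts the dimension by at most one, so the hyperplanes of `B` share a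
nonzero vector `b`, and those of `A` share a nonzero vector `a ⟂ b`. Every `W i` then contains `a`
or `b`, and in either case `P_i a ⟂ P_i b`, so `‖P_i (a + b)‖ = ‖P_i (a - b)‖` for all `i`,
although `a + b ≠ ±(a - b)`.
-/

open scoped InnerProductSpace

open Module Submodule

namespace Submodule

variable {K V : Type*} [DivisionRing K] [AddCommGroup V] [Module K V] [FiniteDimensional K V]

theorem finrank_le_finrank_inf_add_one {U W : Submodule K V}
    (hW : finrank K V ≤ finrank K W + 1) : finrank K U ≤ finrank K ↥(U ⊓ W) + 1 := by
  have := finrank_sup_add_finrank_inf_eq U W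
  have := (U ⊔ W).finrank_le
  omega

theorem finrank_le_finrank_biInf_add_card {ι : Type*} (W : ι → Submodule K V)
    (hW : ∀ i, finrank K V ≤ finrank K (W i) + 1) (s : Finset ι) :
    finrank K V ≤ finrank K ↥(⨅ i ∈ s, W i) + s.card := by
  classical
  induction s using Finset.induction_on with
  | empty =>
    rw [show (⨅ i ∈ (∅ : Finset ι), W i) = ⊤ by simp, finrank_top, Finset.card_empty, add_zero]
  | insert j s hj ih =>
    rw [Finset.iInf_insert, inf_comm, Finset.card_insert_of_notMem hj]
    have := finrank_le_finrank_inf_add_one (U := ⨅ i ∈ s, W i) (hW j)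
    omega

end Submodule

section InnerProductSpace

variable {𝕜 E : Type*} [RCLike 𝕜] [NormedAddCommGroup E] [InnerProductSpace 𝕜 E]

theorem Submodule.inner_starProjection_eq_zero (K : Submodule 𝕜 E) [K.HasOrthogonalProjection]
    {a b : E} (hab : ⟪a, b⟫_𝕜 = 0) (hmem : a ∈ K ∨ b ∈ K) :
    ⟪K.starProjection a, K.starProjection b⟫_𝕜 = 0 := by
  rcases hmem with ha | hb
  · rw [starProjection_eq_self_iff.mpr ha, ← inner_starProjection_left_eq_right,
      starProjection_eq_self_iff.mpr ha, hab]
  · rw [starProjection_eq_self_iff.mpr hb, inner_starProjection_left_eq_right,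
      starProjection_eq_self_iff.mpr hb, hab]

theorem Submodule.norm_starProjection_add_eq_norm_starProjection_sub (K : Submodule 𝕜 E)
    [K.HasOrthogonalProjection] {a b : E} (hab : ⟪a, b⟫_𝕜 = 0) (hmem : a ∈ K ∨ b ∈ K) :
    ‖K.starProjection (a + b)‖ = ‖K.starProjection (a - b)‖ := by
  rw [map_add, map_sub, add_comm, norm_sub_rev,
    norm_sub_eq_norm_add (K.inner_starProjection_eq_zero hab hmem)]

variable [FiniteDimensional 𝕜 E]

theorem exists_inner_eq_zero_forall_mem_or_mem {ι : Type*} [Fintype ι]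
    (W : ι → Submodule 𝕜 E) (hW : ∀ i, finrank 𝕜 E ≤ finrank 𝕜 (W i) + 1)
    (hcard : Fintype.card ι + 3 ≤ 2 * finrank 𝕜 E) :
    ∃ a b : E, a ≠ 0 ∧ b ≠ 0 ∧ ⟪a, b⟫_𝕜 = 0 ∧ ∀ i, a ∈ W i ∨ b ∈ W i := by
  classical
  obtain ⟨s, -, hs⟩ := Finset.exists_subset_card_eq
    (min_le_right (finrank 𝕜 E - 2) (Finset.univ : Finset ι).card)
  rw [Finset.card_univ] at hs
  have hsc : sᶜ.card = Fintype.card ι - s.card := by rw [Finset.card_compl]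
  obtain ⟨b, hb, hb0⟩ : ∃ b ∈ ⨅ i ∈ sᶜ, W i, b ≠ 0 := by
    refine exists_mem_ne_zero_of_ne_bot (one_le_finrank_iff.mp ?_)
    have := finrank_le_finrank_biInf_add_card W hW sᶜ
    omega
  have hbperp : finrank 𝕜 E ≤ finrank 𝕜 (𝕜 ∙ b)ᗮ + 1 := by
    rw [← finrank_add_finrank_orthogonal (𝕜 ∙ b), finrank_span_singleton hb0, add_comm]
  obtain ⟨a, ⟨ha, hab⟩, ha0⟩ : ∃ a ∈ (⨅ i ∈ s, W i) ⊓ (𝕜 ∙ b)ᗮ, a ≠ 0 := by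
    refine exists_mem_ne_zero_of_ne_bot (one_le_finrank_iff.mp ?_)
    have := finrank_le_finrank_inf_add_one (U := ⨅ i ∈ s, W i) hbperp
    have := finrank_le_finrank_biInf_add_card W hW s
    omega
  refine ⟨a, b, ha0, hb0, inner_eq_zero_symm.mp (hab b (mem_span_singleton_self b)), fun i => ?_⟩
  by_cases hi : i ∈ s
  · exact .inl ((mem_iInf _).mp ((mem_iInf _).mp ha i) hi)
  · exact .inr ((mem_iInf _).mp ((mem_iInf _).mp hb i) (Finset.mem_compl.mpr hi))

end InnerProductSpace

/-- Hyperplanes doing phase retrieval in `ℝ^d` number at least `2d - 2`. -/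
theorem hyperplanes_phase_retrieval_lower_bound (d n : ℕ)
    (W : Fin n → Submodule ℝ (EuclideanSpace ℝ (Fin d)))
    (hdim : ∀ i, Module.finrank ℝ (W i) = d - 1)
    (hPR : ∀ x y : EuclideanSpace ℝ (Fin d),
      (∀ i, ‖(Submodule.orthogonalProjectionOnto (W i) x : EuclideanSpace ℝ (Fin d))‖
        = ‖(Submodule.orthogonalProjectionOnto (W i) y : EuclideanSpace ℝ (Fin d))‖) → x = y ∨ x = -y) :
    2 * d - 2 ≤ n := by
  by_contra! hn
  obtain ⟨a, b, ha, hb, hab, hmem⟩ := exists_inner_eq_zero_forall_mem_or_mem W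
    (fun i => by rw [hdim, finrank_euclideanSpace_fin]; omega)
    (by rw [Fintype.card_fin, finrank_euclideanSpace_fin]; omega)
  rcases hPR (a + b) (a - b)
      (fun i => (W i).norm_starProjection_add_eq_norm_starProjection_sub hab (hmem i)) with h | h
  · have : (2 : ℝ) • b = 0 := by linear_combination (norm := module) h
    exact hb ((smul_eq_zero.mp this).resolve_left two_ne_zero)
  · have : (2 : ℝ) • a = 0 := by linear_combination (norm := module) h
    exact ha ((smul_eq_zero.mp this).resolve_left two_ne_zero)
end

section
/- Suppose the hyperplanes W_1,...,W_{2d-2} in R^d do phase retrieval, and write W_i^⊥ = span{φ_i} with φ_i ≠ 0. Then {φ_i}_{i=1}^{2d-2} is full spark: every d-element subset is linearly independent. -/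
open scoped InnerProductSpace

/-!
Suppose the vectors `φ i`, `i ∈ s`, with `|s| = d`, were dependent. Then some `x ≠ 0` is
orthogonal to all of them, i.e. lies in each of those `d` hyperplanes, so `P_i x = x` for `i ∈ s`.
For the remaining `i`, `P_i x` differs from `x` by a multiple of `φ i`. Hence all the `P_i x` lie
in the span of `x` and the `d - 2` vectors `φ i`, `i ∉ s`, a proper subspace, contradicting
phase retrieval.
-/

open Module Submodule

variable {E : Type*} [NormedAddCommGroup E] [InnerProductSpace ℝ E] [FiniteDimensional ℝ E]
  {ι : Type*}

/-- Edidin's criterion, taken as the definition of phase retrieval by subspaces. -/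
def DoesPhaseRetrieval (W : ι → Submodule ℝ E) : Prop :=
  ∀ x : E, x ≠ 0 → span ℝ (Set.range fun i => (W i).starProjection x) = ⊤

theorem Submodule.starProjection_mem_span_singleton_sup_orthogonal
    {𝕜 F : Type*} [RCLike 𝕜] [NormedAddCommGroup F] [InnerProductSpace 𝕜 F]
    (K : Submodule 𝕜 F) [K.HasOrthogonalProjection] (x : F) :
    K.starProjection x ∈ (𝕜 ∙ x) ⊔ Kᗮ := by
  rw [← sub_sub_cancel x (K.starProjection x)]
  exact sub_mem (mem_sup_left (mem_span_singleton_self x))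
    (mem_sup_right (K.sub_starProjection_mem_orthogonal x))

theorem exists_ne_zero_forall_inner_eq_zero_of_not_linearIndependent {φ : ι → E}
    (s : Finset ι) (hs : s.card = finrank ℝ E) (hdep : ¬LinearIndependent ℝ fun i : s => φ i) :
    ∃ x ≠ 0, ∀ i ∈ s, ⟪φ i, x⟫_ℝ = 0 := by
  set S := span ℝ (Set.range fun i : s => φ i)
  have hS : S ≠ ⊤ := fun htop => hdep <|
    linearIndependent_of_top_le_span_of_card_eq_finrank htop.ge (by simpa using hs)
  obtain ⟨x, hx, hx0⟩ := exists_mem_ne_zero_of_ne_bot (mt S.orthogonal_eq_bot_iff.mp hS)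
  exact ⟨x, hx0, fun i hi => (mem_orthogonal S x).mp hx _ (subset_span ⟨⟨i, hi⟩, rfl⟩)⟩

section

variable [Fintype ι] [DecidableEq ι] {W : ι → Submodule ℝ E} {φ : ι → E}

theorem span_starProjection_le (hperp : ∀ i, (W i)ᗮ = ℝ ∙ φ i) (s : Finset ι) {x : E}
    (hx : ∀ i ∈ s, ⟪φ i, x⟫_ℝ = 0) :
    span ℝ (Set.range fun i => (W i).starProjection x) ≤
      (ℝ ∙ x) ⊔ span ℝ (Set.range fun i : ↥sᶜ => φ i) := by
  rw [span_le, Set.range_subset_iff]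
  intro i
  by_cases hi : i ∈ s
  · have hxW : x ∈ W i := by
      rw [← (W i).orthogonal_orthogonal, hperp i, mem_orthogonal_singleton_iff_inner_right]
      exact hx i hi
    rw [starProjection_eq_self_iff.mpr hxW]
    exact mem_sup_left (mem_span_singleton_self x)
  · have hφi : (W i)ᗮ ≤ span ℝ (Set.range fun i : ↥sᶜ => φ i) := by
      rw [hperp i, span_singleton_le_iff_mem]
      exact subset_span ⟨⟨i, Finset.mem_compl.mpr hi⟩, rfl⟩
    exact sup_le_sup_left hφi _ ((W i).starProjection_mem_span_singleton_sup_orthogonal x)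

theorem DoesPhaseRetrieval.linearIndependent (hPR : DoesPhaseRetrieval W)
    (hperp : ∀ i, (W i)ᗮ = ℝ ∙ φ i) (hcard : Fintype.card ι + 2 ≤ 2 * finrank ℝ E)
    (s : Finset ι) (hs : s.card = finrank ℝ E) : LinearIndependent ℝ fun i : s => φ i := by
  by_contra hdep
  obtain ⟨x, hx0, hx⟩ := exists_ne_zero_forall_inner_eq_zero_of_not_linearIndependent s hs hdep
  have htop := (hPR x hx0).symm.trans_le (span_starProjection_le hperp s hx)
  have hrank : finrank ℝ E ≤ 1 + sᶜ.card := calc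
    finrank ℝ E = finrank ℝ (⊤ : Submodule ℝ E) := (finrank_top ℝ E).symm
    _ ≤ finrank ℝ ↥((ℝ ∙ x) ⊔ span ℝ (Set.range fun i : ↥sᶜ => φ i)) :=
      Submodule.finrank_mono htop
    _ ≤ finrank ℝ (ℝ ∙ x) + finrank ℝ (span ℝ (Set.range fun i : ↥sᶜ => φ i)) :=
      Submodule.finrank_add_le_finrank_add_finrank _ _
    _ ≤ 1 + sᶜ.card := by
      rw [finrank_span_singleton hx0]
      exact add_le_add_right ((finrank_range_le_card _).trans_eq (Fintype.card_coe _)) 1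
  rw [Finset.card_compl] at hrank
  have := s.card_le_univ
  omega

end

theorem minimal_hyperplanes_full_spark_general (d : ℕ)
    (W : Fin (2 * d - 2) → Submodule ℝ (EuclideanSpace ℝ (Fin d)))
    (hPR : ∀ x : EuclideanSpace ℝ (Fin d), x ≠ 0 →
      Submodule.span ℝ
        (Set.range fun i => (Submodule.orthogonalProjection (W i) x : EuclideanSpace ℝ (Fin d))) = ⊤)
    (φ : Fin (2 * d - 2) → EuclideanSpace ℝ (Fin d))
    (hperp : ∀ i, (W i)ᗮ = ℝ ∙ φ i) :
    ∀ s : Finset (Fin (2 * d - 2)), s.card = d →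
      LinearIndependent ℝ (fun i : s => φ i) := by
  intro s hs
  rcases Nat.eq_zero_or_pos d with rfl | hd
  · obtain rfl := Finset.card_eq_zero.mp hs
    exact linearIndependent_empty_type
  · refine DoesPhaseRetrieval.linearIndependent hPR hperp ?_ s (by simpa using hs)
    simp only [Fintype.card_fin, finrank_euclideanSpace_fin]
    omega

/-- If `2d - 2` hyperplanes do phase retrieval in `ℝ^d`, then the spanning vectors of
their orthogonal complements are full spark. -/
theorem minimal_hyperplanes_full_spark (d : ℕ)
    (W : Fin (2 * d - 2) → Submodule ℝ (EuclideanSpace ℝ (Fin d)))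
    (hdim : ∀ i, Module.finrank ℝ (W i) = d - 1)
    (hPR : ∀ x : EuclideanSpace ℝ (Fin d), x ≠ 0 →
      Submodule.span ℝ
        (Set.range fun i => (Submodule.orthogonalProjection (W i) x : EuclideanSpace ℝ (Fin d))) = ⊤)
    (φ : Fin (2 * d - 2) → EuclideanSpace ℝ (Fin d))
    (hφ : ∀ i, φ i ≠ 0)
    (hperp : ∀ i, (W i)ᗮ = ℝ ∙ φ i) :
    ∀ s : Finset (Fin (2 * d - 2)), s.card = d →
      LinearIndependent ℝ (fun i : s => φ i) :=
  minimal_hyperplanes_full_spark_general d W hPR φ hperp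
end

section
/- In R^3, let W_1 = span{e_2,e_3}, W_2 = span{e_1,e_3}, W_3 = span{e_1+e_2, e_3}, W_4 = span{e_1, e_2+e_3}, W_5 = span{e_2, e_1+e_3}, with orthogonal projections P_1,...,P_5. Then for every nonzero x ∈ R^3, span{P_i x}_{i=1}^5 = R^3; hence {W_i}_{i=1}^5 does phase retrieval. -/
open scoped InnerProductSpace

noncomputable section

local notation "e₁" => EuclideanSpace.single (0 : Fin 3) (1 : ℝ)
local notation "e₂" => EuclideanSpace.single (1 : Fin 3) (1 : ℝ)
local notation "e₃" => EuclideanSpace.single (2 : Fin 3) (1 : ℝ)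

def Wsub : Fin 5 → Submodule ℝ (EuclideanSpace ℝ (Fin 3)) :=
  ![Submodule.span ℝ {e₂, e₃},
    Submodule.span ℝ {e₁, e₃},
    Submodule.span ℝ {e₁ + e₂, e₃},
    Submodule.span ℝ {e₁, e₂ + e₃},
    Submodule.span ℝ {e₂, e₁ + e₃}]

/-!
If `‖Pᵢ x‖ = ‖Pᵢ y‖` for all `i`, then `x - y` is orthogonal to every `Pᵢ (x + y)`, because
`⟪P (x + y), x - y⟫ = ‖P x‖² - ‖P y‖²` for an orthogonal projection `P`; so when the `Pᵢ (x + y)`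
span, either `x + y = 0` or `x - y = 0`.

For the five planes, `v ⟂ Pᵢ x` for all `i` is a system of five bilinear equations in the
coordinates `a, b, c` of `x` and `p, q, r` of `v`. Through the identity
`(a q + b p)² = (a q - b p)² + 4 (a p) (b q)` it forces every product of a coordinate of `x` with
a coordinate of `v` to vanish, so `v = 0` whenever `x ≠ 0`.
-/

open Submodule

section InnerProductSpace

variable {E : Type*} [NormedAddCommGroup E] [InnerProductSpace ℝ E]

theorem starProjection_span_pair_of_inner_eq_zero {u w : E}
    [(span ℝ {u, w}).HasOrthogonalProjection] (huw : ⟪u, w⟫_ℝ = 0) (x : E) :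
    (span ℝ {u, w}).starProjection x = (⟪u, x⟫_ℝ / ‖u‖ ^ 2) • u + (⟪w, x⟫_ℝ / ‖w‖ ^ 2) • w := by
  have hcoeff : ∀ z : E, ⟪z, x⟫_ℝ / ‖z‖ ^ 2 * ‖z‖ ^ 2 = ⟪z, x⟫_ℝ := fun z =>
    div_mul_cancel_of_imp fun hz => by
      rw [norm_eq_zero.1 (pow_eq_zero_iff two_ne_zero |>.1 hz), inner_zero_left]
  refine eq_starProjection_of_mem_of_inner_eq_zero ?_ fun z hz => ?_
  · exact add_mem (smul_mem _ _ (subset_span (by simp))) (smul_mem _ _ (subset_span (by simp)))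
  · obtain ⟨a, b, rfl⟩ := mem_span_pair.1 hz
    have hwu : ⟪w, u⟫_ℝ = 0 := by rw [real_inner_comm, huw]
    simp only [inner_sub_left, inner_add_left, inner_add_right, inner_smul_left, inner_smul_right,
      huw, hwu, real_inner_self_eq_norm_sq, real_inner_comm u x, real_inner_comm w x,
      RCLike.conj_to_real]
    linear_combination -(a * hcoeff u) - b * hcoeff w

theorem inner_starProjection_add_sub (K : Submodule ℝ E) [K.HasOrthogonalProjection] (x y : E) :
    ⟪K.starProjection (x + y), x - y⟫_ℝ =
      ‖K.starProjection x‖ ^ 2 - ‖K.starProjection y‖ ^ 2 := by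
  have hself : ∀ z, ⟪K.starProjection z, z⟫_ℝ = ‖K.starProjection z‖ ^ 2 := fun z => by
    simpa using K.re_inner_starProjection_eq_normSq z
  have hswap : ⟪K.starProjection y, x⟫_ℝ = ⟪K.starProjection x, y⟫_ℝ := by
    rw [K.inner_starProjection_left_eq_right, real_inner_comm]
  rw [map_add, inner_add_left, inner_sub_right, inner_sub_right, hself, hself, hswap]
  ring

theorem eq_zero_of_span_eq_top_of_inner_eq_zero {s : Set E} (hs : span ℝ s = ⊤) {v : E}
    (hv : ∀ u ∈ s, ⟪u, v⟫_ℝ = 0) : v = 0 := by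
  have hortho : span ℝ s ⟂ span ℝ {v} :=
    isOrtho_span.2 fun u hu w hw => (Set.mem_singleton_iff.1 hw) ▸ hv u hu
  rwa [hs, isOrtho_top_left, span_singleton_eq_bot] at hortho

theorem eq_or_eq_neg_of_norm_starProjection_eq {ι : Type*} (K : ι → Submodule ℝ E)
    [∀ i, (K i).HasOrthogonalProjection]
    (hK : ∀ x, x ≠ 0 → span ℝ (Set.range fun i => (K i).starProjection x) = ⊤) {x y : E}
    (h : ∀ i, ‖(K i).starProjection x‖ = ‖(K i).starProjection y‖) : x = y ∨ x = -y := by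
  rcases eq_or_ne (x + y) 0 with hxy | hxy
  · exact Or.inr (eq_neg_of_add_eq_zero_left hxy)
  · refine Or.inl (sub_eq_zero.1 (eq_zero_of_span_eq_top_of_inner_eq_zero (hK _ hxy) ?_))
    rintro _ ⟨i, rfl⟩
    rw [inner_starProjection_add_sub, h i, sub_self]

end InnerProductSpace

theorem EuclideanSpace.eq_zero_of_forall_mul_eq_zero {ι : Type*} {x v : EuclideanSpace ℝ ι}
    (hx : x ≠ 0) (h : ∀ i j, x i * v j = 0) : v = 0 := by
  obtain ⟨i, hi⟩ : ∃ i, x i ≠ 0 := by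
    by_contra! hzero
    exact hx (PiLp.ext hzero)
  exact PiLp.ext fun j => (mul_eq_zero.1 (h i j)).resolve_left hi

theorem mul_eq_zero_of_mul_add_mul_eq_zero {a b p q : ℝ} (hsum : a * q + b * p = 0)
    (hprod : 0 ≤ a * p * (b * q)) : a * q = 0 ∧ b * p = 0 := by
  have hsq : (a * q - b * p) * (a * q - b * p) + 4 * (a * p * (b * q)) = 0 := by
    linear_combination (a * q + b * p) * hsum
  have hdiff : a * q - b * p = 0 :=
    mul_self_eq_zero.1 (le_antisymm (by linarith) (mul_self_nonneg _))
  exact ⟨by linear_combination (hsum + hdiff) / 2, by linear_combination (hsum - hdiff) / 2⟩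

theorem mul_eq_zero_of_Wsub_forms_eq_zero {x v : EuclideanSpace ℝ (Fin 3)}
    (h₁ : x 1 * v 1 + x 2 * v 2 = 0) (h₂ : x 0 * v 0 + x 2 * v 2 = 0)
    (h₃ : (x 0 + x 1) * (v 0 + v 1) / 2 + x 2 * v 2 = 0)
    (h₄ : x 0 * v 0 + (x 1 + x 2) * (v 1 + v 2) / 2 = 0)
    (h₅ : x 1 * v 1 + (x 0 + x 2) * (v 0 + v 2) / 2 = 0) (i j : Fin 3) : x i * v j = 0 := by
  have h₁₁ : x 1 * v 1 = x 0 * v 0 := by linear_combination h₁ - h₂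
  have h₂₂ : x 2 * v 2 = -(x 0 * v 0) := by linear_combination h₂
  obtain ⟨h₀₁, h₁₀⟩ := mul_eq_zero_of_mul_add_mul_eq_zero
    (by linear_combination 2 * h₃ - h₁ - h₂ : x 0 * v 1 + x 1 * v 0 = 0)
    (by rw [h₁₁]; exact mul_self_nonneg _)
  have h₀₀ : x 0 * v 0 = 0 := by
    apply pow_eq_zero_iff two_ne_zero |>.1
    linear_combination (-(x 0 * v 0)) * h₁₁ + x 1 * v 0 * h₀₁
  obtain ⟨h₀₂, h₂₀⟩ := mul_eq_zero_of_mul_add_mul_eq_zero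
    (by linear_combination 2 * h₅ - h₂ - 2 * h₁₁ - 2 * h₀₀ : x 0 * v 2 + x 2 * v 0 = 0)
    (by rw [h₀₀, zero_mul])
  obtain ⟨h₁₂, h₂₁⟩ := mul_eq_zero_of_mul_add_mul_eq_zero
    (by linear_combination 2 * h₄ - h₁ - 2 * h₀₀ : x 1 * v 2 + x 2 * v 1 = 0)
    (by rw [h₁₁, h₀₀, zero_mul])
  fin_cases i <;> fin_cases j <;> simp only [Fin.zero_eta, Fin.mk_one, Fin.reduceFinMk] <;>
    linarith

theorem inner_starProjection_Wsub (x v : EuclideanSpace ℝ (Fin 3)) :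
    (fun i => ⟪(Wsub i).starProjection x, v⟫_ℝ) =
      ![x 1 * v 1 + x 2 * v 2,
        x 0 * v 0 + x 2 * v 2,
        (x 0 + x 1) * (v 0 + v 1) / 2 + x 2 * v 2,
        x 0 * v 0 + (x 1 + x 2) * (v 1 + v 2) / 2,
        x 1 * v 1 + (x 0 + x 2) * (v 0 + v 2) / 2] := by
  funext i
  fin_cases i <;>
  · simp [Wsub, starProjection_span_pair_of_inner_eq_zero, inner_add_left, inner_add_right,
      inner_smul_left, EuclideanSpace.inner_single_left, EuclideanSpace.norm_eq, Fin.sum_univ_three]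
    try ring

theorem span_starProjection_Wsub_eq_top {x : EuclideanSpace ℝ (Fin 3)} (hx : x ≠ 0) :
    span ℝ (Set.range fun i => (Wsub i).starProjection x) = ⊤ := by
  rw [← orthogonal_eq_bot_iff, eq_bot_iff]
  intro v hv
  have h : ∀ i, ⟪(Wsub i).starProjection x, v⟫_ℝ = 0 := fun i =>
    inner_right_of_mem_orthogonal (subset_span (Set.mem_range_self i)) hv
  simp only [congrFun (inner_starProjection_Wsub x v)] at h
  exact (mem_bot ℝ).2 <| EuclideanSpace.eq_zero_of_forall_mul_eq_zero hx <|
    mul_eq_zero_of_Wsub_forms_eq_zero (h 0) (h 1) (h 2) (h 3) (h 4)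

/-- For every nonzero `x ∈ ℝ³` the projections `Pᵢ x` span `ℝ³`, hence the five
subspaces `Wᵢ` do phase retrieval. -/
theorem Wsub_projections_span_and_phase_retrieval :
    (∀ x : EuclideanSpace ℝ (Fin 3), x ≠ 0 →
      Submodule.span ℝ
        (Set.range fun i : Fin 5 =>
          ((Wsub i).orthogonalProjection x : EuclideanSpace ℝ (Fin 3))) = ⊤) ∧
    (∀ x y : EuclideanSpace ℝ (Fin 3),
      (∀ i, ‖((Wsub i).orthogonalProjection x : EuclideanSpace ℝ (Fin 3))‖
        = ‖((Wsub i).orthogonalProjection y : EuclideanSpace ℝ (Fin 3))‖) →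
      x = y ∨ x = -y) :=
  ⟨fun _ => span_starProjection_Wsub_eq_top, fun _ _ =>
    eq_or_eq_neg_of_norm_starProjection_eq Wsub fun _ => span_starProjection_Wsub_eq_top⟩

end
end

section
/- In R^3, let W_1 = span{e_2,e_3}, W_2 = span{e_1,e_3}, W_3 = span{e_1+e_2, e_3}, W_4 = span{e_1, e_2+e_3}, W_5 = span{e_2, e_1+e_3}. Then any choice of nonzero vectors u_i ∈ W_i^⊥ fails the complement property in R^3: there is a subset I of {1,...,5} such that neither {u_i : i ∈ I} nor {u_i : i ∈ Iᶜ} spans R^3. In particular, u_1, u_2, u_3 are all orthogonal to e_3, so they do not span R^3. -/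
open scoped InnerProductSpace

noncomputable section

local notation "e₁" => EuclideanSpace.single (0 : Fin 3) (1 : ℝ)
local notation "e₂" => EuclideanSpace.single (1 : Fin 3) (1 : ℝ)
local notation "e₃" => EuclideanSpace.single (2 : Fin 3) (1 : ℝ)

/-- Any choice of nonzero vectors `uᵢ ∈ Wᵢᗮ` fails the complement property; in
particular `u₁, u₂, u₃` are orthogonal to `e₃` and do not span `ℝ³`. -/
theorem Wsub_perp_vectors_fail_complement_property
    (u : Fin 5 → EuclideanSpace ℝ (Fin 3))
    (hu : ∀ i, u i ∈ (Wsub i)ᗮ) (hne : ∀ i, u i ≠ 0) :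
    (∃ I : Finset (Fin 5),
      Submodule.span ℝ (u '' (I : Set (Fin 5))) ≠ ⊤ ∧
      Submodule.span ℝ (u '' ((I : Set (Fin 5))ᶜ)) ≠ ⊤) ∧
    (∀ i : Fin 5, i = 0 ∨ i = 1 ∨ i = 2 → ⟪u i, e₃⟫_ℝ = 0) ∧
    Submodule.span ℝ {u 0, u 1, u 2} ≠ ⊤ := by
  classical
  -- e₃ belongs to each of W₀, W₁, W₂
  have he3mem : ∀ i : Fin 5, i = 0 ∨ i = 1 ∨ i = 2 → e₃ ∈ Wsub i := by
    rintro i (rfl | rfl | rfl) <;>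
      · simp only [Wsub, Matrix.cons_val_zero, Matrix.cons_val_one, Matrix.head_cons,
          Matrix.cons_val_two, Matrix.tail_cons]
        exact Submodule.subset_span (by simp)
  have he3 : ∀ i : Fin 5, i = 0 ∨ i = 1 ∨ i = 2 → ⟪u i, e₃⟫_ℝ = 0 := by
    intro i hi
    have := (hu i) e₃ (he3mem i hi)
    rwa [real_inner_comm] at this
  -- membership of the uᵢ in (ℝ∙e₃)ᗮ
  have hmem : ∀ i : Fin 5, i = 0 ∨ i = 1 ∨ i = 2 → u i ∈ (ℝ ∙ (e₃ : EuclideanSpace ℝ (Fin 3)))ᗮ := by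
    intro i hi
    rw [Submodule.mem_orthogonal_singleton_iff_inner_right]
    rw [real_inner_comm]
    exact he3 i hi
  have horthne : (ℝ ∙ (e₃ : EuclideanSpace ℝ (Fin 3)))ᗮ ≠ ⊤ := by
    intro h
    have : (e₃ : EuclideanSpace ℝ (Fin 3)) ∈ (ℝ ∙ (e₃ : EuclideanSpace ℝ (Fin 3)))ᗮ := by
      rw [h]; trivial
    have h1 : ⟪(e₃ : EuclideanSpace ℝ (Fin 3)), e₃⟫_ℝ = 0 := by
      rw [Submodule.mem_orthogonal_singleton_iff_inner_right] at this
      exact this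
    rw [real_inner_self_eq_norm_sq, EuclideanSpace.norm_single] at h1
    norm_num at h1
  have hspan012 : Submodule.span ℝ ({u 0, u 1, u 2} : Set (EuclideanSpace ℝ (Fin 3))) ≠ ⊤ := by
    intro h
    apply horthne
    rw [eq_top_iff, ← h, Submodule.span_le]
    rintro x (rfl | rfl | rfl)
    · exact hmem 0 (Or.inl rfl)
    · exact hmem 1 (Or.inr (Or.inl rfl))
    · exact hmem 2 (Or.inr (Or.inr rfl))
  refine ⟨⟨({0, 1, 2} : Finset (Fin 5)), ?_, ?_⟩, he3, hspan012⟩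
  · intro h
    apply horthne
    rw [eq_top_iff, ← h, Submodule.span_le]
    rintro x ⟨i, hi, rfl⟩
    simp only [Finset.coe_insert, Finset.coe_singleton, Set.mem_insert_iff,
      Set.mem_singleton_iff] at hi
    exact hmem i hi
  · intro h
    have hsub : u '' ((({0, 1, 2} : Finset (Fin 5)) : Set (Fin 5))ᶜ) ⊆ {u 3, u 4} := by
      rintro x ⟨i, hi, rfl⟩
      simp only [Finset.coe_insert, Finset.coe_singleton, Set.mem_compl_iff,
        Set.mem_insert_iff, Set.mem_singleton_iff, not_or] at hi
      have : i = 3 ∨ i = 4 := by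
        obtain ⟨h0, h1, h2⟩ := hi
        simp only [Fin.ext_iff] at h0 h1 h2 ⊢
        omega
      rcases this with rfl | rfl
      · exact Or.inl rfl
      · exact Or.inr rfl
    have hle : Submodule.span ℝ (u '' ((({0, 1, 2} : Finset (Fin 5)) : Set (Fin 5))ᶜ))
        ≤ Submodule.span ℝ ({u 3, u 4} : Set (EuclideanSpace ℝ (Fin 3))) :=
      Submodule.span_mono hsub
    rw [h, top_le_iff] at hle
    have hcard : Module.finrank ℝ
        (Submodule.span ℝ ({u 3, u 4} : Set (EuclideanSpace ℝ (Fin 3)))) ≤ 2 := by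
      have := finrank_span_le_card (R := ℝ) ({u 3, u 4} : Set (EuclideanSpace ℝ (Fin 3)))
      refine this.trans ?_
      have : ({u 3, u 4} : Set (EuclideanSpace ℝ (Fin 3))).toFinset ⊆ {u 3, u 4} := by
        intro x hx
        simp only [Set.mem_toFinset] at hx
        simpa using hx
      calc ({u 3, u 4} : Set (EuclideanSpace ℝ (Fin 3))).toFinset.card
          ≤ ({u 3, u 4} : Finset (EuclideanSpace ℝ (Fin 3))).card := Finset.card_le_card this
        _ ≤ 2 := Finset.card_insert_le _ _ |>.trans (by simp)
    rw [hle] at hcard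
    have : Module.finrank ℝ (⊤ : Submodule ℝ (EuclideanSpace ℝ (Fin 3))) = 3 := by
      rw [finrank_top]
      simp [finrank_euclideanSpace]
    omega

end
end
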